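/- Let α ∈ (0,1) and let S be a positive α-stable random variable, i.e. a nonnegative random variable with E[e^{-λS}] = e^{-λ^α} for all λ ≥ 0, and assume S > 0 almost surely. Then the random variable M := S^{-α} (the Mittag--Leffler random variable) has Laplace transform E[e^{-λM}] = E_α(-λ) = ∑_{k=0}^∞ (-λ)^k / Γ(αk + 1) for every λ ≥ 0. -/

import Mathlib

/-!
For `c > 0` and `s > 0`, `Γ(c) s^(-c) = ∫₀^∞ t^(c-1) e^(-ts) dt`. Integrating over `S` and swapping
the integrals (Tonelli) turns the Laplace transform of `S` into
`Γ(c) E[S^(-c)] = ∫₀^∞ t^(c-1) e^(-t^α) dt = Γ(c/α) / α`, so `M = S^(-α)` has moments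
`E[M^k] = k! / Γ(αk + 1)`. Since `Γ(αk + 1)` outgrows every geometric sequence,
`∑ λ^k E[M^k] / k!` converges, and the exponential series of `e^(-λM)` may be integrated term by
term.
-/

open MeasureTheory Real Set Filter Topology Asymptotics Nat

theorem tendsto_pow_div_Gamma_mul_add_one {α : ℝ} (hα : 0 < α) (b : ℝ) :
    Tendsto (fun k : ℕ => b ^ k / Gamma (α * k + 1)) atTop (𝓝 0) := by
  set C : ℝ := max |b| 1 ^ (1 / α)
  have hC : 1 ≤ C := one_le_rpow (le_max_right _ _) (by positivity)
  have hαk : Tendsto (fun k : ℕ => α * k) atTop atTop :=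
    tendsto_natCast_atTop_atTop.const_mul_atTop hα
  have hfact : Tendsto (fun k : ℕ => C * (C ^ ⌊α * k⌋₊ / ⌊α * k⌋₊ !)) atTop (𝓝 0) := by
    simpa using ((FloorSemiring.tendsto_pow_div_factorial_atTop C).comp
      (tendsto_nat_floor_atTop.comp hαk)).const_mul C
  refine squeeze_zero_norm' ?_ hfact
  filter_upwards [hαk.eventually_ge_atTop 1] with k hk
  set n := ⌊α * k⌋₊
  have hn : 1 ≤ n := Nat.le_floor (by exact_mod_cast hk)
  have hpow : |b| ^ k ≤ C ^ (n + 1) := calc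
    |b| ^ k ≤ max |b| 1 ^ k := by gcongr; exact le_max_left _ _
    _ = C ^ (α * k) := by
      rw [← rpow_mul (by positivity), ← mul_assoc, one_div_mul_cancel hα.ne', one_mul,
        rpow_natCast]
    _ ≤ C ^ ((n : ℝ) + 1) := rpow_le_rpow_of_exponent_le hC (Nat.lt_floor_add_one _).le
    _ = C ^ (n + 1) := by exact_mod_cast rpow_natCast C (n + 1)
  have hGamma : (n ! : ℝ) ≤ Gamma (α * k + 1) := by
    rw [← Gamma_nat_eq_factorial]
    exact Gamma_strictMonoOn_Ici.monotoneOn (by simp; exact_mod_cast Nat.succ_le_succ hn)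
      (by simp; linarith) (by gcongr; exact Nat.floor_le (by positivity))
  rw [norm_div, norm_pow, norm_of_nonneg (Gamma_pos_of_pos (by positivity)).le, norm_eq_abs,
    ← mul_div_assoc, ← _root_.pow_succ']
  exact div_le_div₀ (by positivity) hpow (by positivity) hGamma

theorem summable_pow_div_Gamma_mul_add_one {α : ℝ} (hα : 0 < α) (x : ℝ) :
    Summable fun k : ℕ => x ^ k / Gamma (α * k + 1) := by
  refine summable_of_isBigO_nat summable_geometric_two ?_
  have h := (isBigO_refl (fun k : ℕ => ((1 : ℝ) / 2) ^ k) atTop).mul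
    ((tendsto_pow_div_Gamma_mul_add_one hα (2 * x)).isBigO_one ℝ)
  refine (h.congr_left fun k => ?_).congr_right fun k => mul_one _
  rw [mul_pow, ← mul_div_assoc, ← mul_assoc, ← mul_pow]
  norm_num

theorem hasSum_integral_exp_neg_mul {Ω : Type*} [MeasurableSpace Ω] {μ : Measure Ω}
    {X : Ω → ℝ} (hX0 : 0 ≤ᵐ[μ] X) (hX : ∀ k : ℕ, Integrable (fun ω => X ω ^ k) μ)
    {t : ℝ} (ht : 0 ≤ t) (hsum : Summable fun k : ℕ => t ^ k * (∫ ω, X ω ^ k ∂μ) / k !) :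
    HasSum (fun k : ℕ => (-t) ^ k * (∫ ω, X ω ^ k ∂μ) / k !) (∫ ω, exp (-(t * X ω)) ∂μ) := by
  set F : ℕ → Ω → ℝ := fun k ω => (-t) ^ k * X ω ^ k / (k ! : ℝ)
  have hF : ∀ k, Integrable (F k) μ := fun k => ((hX k).const_mul _).div_const _
  have hnorm : ∀ k : ℕ, ∫ ω, ‖F k ω‖ ∂μ = t ^ k * (∫ ω, X ω ^ k ∂μ) / k ! := by
    intro k
    rw [← integral_const_mul, ← integral_div]
    refine integral_congr_ae ?_
    filter_upwards [hX0] with ω hω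
    simp [F, abs_of_nonneg ht, abs_of_nonneg hω]
  have hexp : ∀ ω, ∑' k, F k ω = exp (-(t * X ω)) := by
    intro ω
    rw [exp_eq_exp_ℝ, NormedSpace.exp_eq_tsum_div]
    congr 1 with k
    rw [← neg_mul, mul_pow]
  have h := hasSum_integral_of_summable_integral_norm hF (by simpa only [hnorm] using hsum)
  simp only [hexp] at h
  have hterm : ∀ k : ℕ, ∫ ω, F k ω ∂μ = (-t) ^ k * (∫ ω, X ω ^ k ∂μ) / k ! := fun k => by
    rw [integral_div, integral_const_mul]
  simpa only [hterm] using h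

theorem lintegral_rpow_mul_exp_neg_mul_Ioi {c s : ℝ} (hc : 0 < c) (hs : 0 < s) :
    ∫⁻ t in Ioi 0, ENNReal.ofReal (t ^ (c - 1) * exp (-(s * t)))
      = ENNReal.ofReal (Gamma c * s ^ (-c)) := by
  have hint : IntegrableOn (fun t : ℝ => t ^ (c - 1) * exp (-(s * t))) (Ioi 0) := by
    simpa using integrableOn_rpow_mul_exp_neg_mul_rpow (by linarith) one_pos hs
  rw [← ofReal_integral_eq_lintegral_ofReal hint, integral_rpow_mul_exp_neg_mul_Ioi hc hs,
    one_div, inv_rpow hs.le, rpow_neg hs.le, mul_comm]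
  exact (ae_restrict_mem measurableSet_Ioi).mono fun t (ht : 0 < t) => by positivity

theorem lintegral_rpow_mul_exp_neg_rpow {a c : ℝ} (ha : 0 < a) (hc : 0 < c) :
    ∫⁻ t in Ioi 0, ENNReal.ofReal (t ^ (c - 1)) * ENNReal.ofReal (exp (-t ^ a))
      = ENNReal.ofReal (Gamma (c / a) / a) := by
  simp_rw [← ENNReal.ofReal_mul' (exp_nonneg _)]
  rw [← ofReal_integral_eq_lintegral_ofReal
      (integrableOn_rpow_mul_exp_neg_rpow (by linarith) ha),
    integral_rpow_mul_exp_neg_rpow ha (by linarith), sub_add_cancel, one_div_mul_eq_div]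
  exact (ae_restrict_mem measurableSet_Ioi).mono fun t (ht : 0 < t) => by positivity

theorem ofReal_Gamma_mul_lintegral_rpow_neg {Ω : Type*} [MeasurableSpace Ω] {μ : Measure Ω}
    [SFinite μ] {S : Ω → ℝ} (hS : Measurable S) (hSpos : ∀ᵐ ω ∂μ, 0 < S ω) {c : ℝ}
    (hc : 0 < c) :
    ENNReal.ofReal (Gamma c) * ∫⁻ ω, ENNReal.ofReal (S ω ^ (-c)) ∂μ
      = ∫⁻ t in Ioi 0,
          ENNReal.ofReal (t ^ (c - 1)) * ∫⁻ ω, ENNReal.ofReal (exp (-(t * S ω))) ∂μ := calc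
  _ = ∫⁻ ω, (∫⁻ t in Ioi 0, ENNReal.ofReal (t ^ (c - 1) * exp (-(S ω * t)))) ∂μ := by
    rw [← lintegral_const_mul _ (by fun_prop)]
    refine lintegral_congr_ae ?_
    filter_upwards [hSpos] with ω hω
    rw [lintegral_rpow_mul_exp_neg_mul_Ioi hc hω, ENNReal.ofReal_mul (Gamma_pos_of_pos hc).le]
  _ = ∫⁻ t in Ioi 0, ∫⁻ ω, ENNReal.ofReal (t ^ (c - 1) * exp (-(S ω * t))) ∂μ :=
    lintegral_lintegral_swap (by fun_prop)
  _ = _ := by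
    refine lintegral_congr fun t => ?_
    rw [← lintegral_const_mul _ (by fun_prop)]
    simp_rw [← ENNReal.ofReal_mul' (exp_nonneg _), mul_comm (S _) t]

def IsPositiveStable {Ω : Type*} [MeasurableSpace Ω] (P : Measure Ω) (S : Ω → ℝ) (α : ℝ) :
    Prop :=
  ∀ l : ℝ, 0 ≤ l → ∫ ω, exp (-(l * S ω)) ∂P = exp (-(l ^ α))

namespace IsPositiveStable

variable {Ω : Type*} [MeasurableSpace Ω] {P : Measure Ω} {S : Ω → ℝ} {α : ℝ}

theorem lintegral_exp_neg_mul [IsFiniteMeasure P] (hS : Measurable S) (hSpos : ∀ᵐ ω ∂P, 0 < S ω)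
    (hstable : IsPositiveStable P S α) {t : ℝ} (ht : 0 ≤ t) :
    ∫⁻ ω, ENNReal.ofReal (exp (-(t * S ω))) ∂P = ENNReal.ofReal (exp (-t ^ α)) := by
  rw [← hstable t ht, ofReal_integral_eq_lintegral_ofReal]
  · refine Integrable.of_bound (by fun_prop) 1 ?_
    filter_upwards [hSpos] with ω hω
    rw [norm_of_nonneg (exp_nonneg _), exp_le_one_iff, neg_nonpos]
    positivity
  · exact ae_of_all _ fun ω => exp_nonneg _

variable [IsProbabilityMeasure P]

theorem lintegral_rpow_neg (hα : 0 < α) (hS : Measurable S) (hSpos : ∀ᵐ ω ∂P, 0 < S ω)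
    (hstable : IsPositiveStable P S α) {c : ℝ} (hc : 0 ≤ c) :
    ∫⁻ ω, ENNReal.ofReal (S ω ^ (-c)) ∂P = ENNReal.ofReal (Gamma (c / α + 1) / Gamma (c + 1)) := by
  rcases hc.eq_or_lt with rfl | hc
  · simp
  have hΓ := Gamma_pos_of_pos hc
  have key := ofReal_Gamma_mul_lintegral_rpow_neg hS hSpos hc
  rw [setLIntegral_congr_fun measurableSet_Ioi fun t (ht : 0 < t) => by
      rw [hstable.lintegral_exp_neg_mul hS hSpos ht.le],
    lintegral_rpow_mul_exp_neg_rpow hα hc] at key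
  refine (ENNReal.mul_right_inj (by simpa using hΓ) ENNReal.ofReal_ne_top).mp (key.trans ?_)
  rw [← ENNReal.ofReal_mul hΓ.le, Gamma_add_one hc.ne', Gamma_add_one (by positivity)]
  congr 1
  field_simp

theorem lintegral_pow_rpow_neg (hα : 0 < α) (hS : Measurable S) (hSpos : ∀ᵐ ω ∂P, 0 < S ω)
    (hstable : IsPositiveStable P S α) (k : ℕ) :
    ∫⁻ ω, ENNReal.ofReal ((S ω ^ (-α)) ^ k) ∂P = ENNReal.ofReal (k ! / Gamma (α * k + 1)) := by
  have h := hstable.lintegral_rpow_neg hα hS hSpos (c := α * k) (by positivity)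
  rw [mul_div_cancel_left₀ _ hα.ne', Gamma_nat_eq_factorial] at h
  rw [← h]
  refine lintegral_congr_ae ?_
  filter_upwards [hSpos] with ω hω
  rw [← rpow_natCast, ← rpow_mul hω.le, neg_mul]

theorem integrable_pow_rpow_neg (hα : 0 < α) (hS : Measurable S) (hSpos : ∀ᵐ ω ∂P, 0 < S ω)
    (hstable : IsPositiveStable P S α) (k : ℕ) :
    Integrable (fun ω => (S ω ^ (-α)) ^ k) P := by
  refine (lintegral_ofReal_ne_top_iff_integrable
    ((hS.pow_const _).pow_const k).aestronglyMeasurable ?_).mp ?_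
  · exact hSpos.mono fun ω hω => pow_nonneg (rpow_pos_of_pos hω _).le k
  · rw [hstable.lintegral_pow_rpow_neg hα hS hSpos k]
    exact ENNReal.ofReal_ne_top

theorem integral_pow_rpow_neg (hα : 0 < α) (hS : Measurable S) (hSpos : ∀ᵐ ω ∂P, 0 < S ω)
    (hstable : IsPositiveStable P S α) (k : ℕ) :
    ∫ ω, (S ω ^ (-α)) ^ k ∂P = k ! / Gamma (α * k + 1) := by
  rw [integral_eq_lintegral_of_nonneg_ae, hstable.lintegral_pow_rpow_neg hα hS hSpos k,
    ENNReal.toReal_ofReal (div_nonneg (by positivity) (Gamma_pos_of_pos (by positivity)).le)]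
  · exact hSpos.mono fun ω hω => pow_nonneg (rpow_pos_of_pos hω _).le k
  · exact ((hS.pow_const _).pow_const k).aestronglyMeasurable

end IsPositiveStable

theorem mittagLeffler_laplace_transform_general
    {Ω : Type*} [MeasurableSpace Ω] (P : Measure Ω) [IsProbabilityMeasure P]
    (α : ℝ) (hα : α ∈ Set.Ioo (0 : ℝ) 1)
    (S : Ω → ℝ) (hSmeas : Measurable S)
    (hSpos : ∀ᵐ ω ∂P, 0 < S ω)
    (hLaplace : ∀ l : ℝ, 0 ≤ l →
      ∫ ω, Real.exp (-(l * S ω)) ∂P = Real.exp (-(l ^ α))) :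
    ∀ l : ℝ, 0 ≤ l →
      ∫ ω, Real.exp (-(l * S ω ^ (-α))) ∂P
        = ∑' k : ℕ, (-l) ^ k / Real.Gamma (α * k + 1) := by
  intro l hl
  have hstable : IsPositiveStable P S α := hLaplace
  have hM0 : 0 ≤ᵐ[P] fun ω => S ω ^ (-α) := hSpos.mono fun ω hω => (rpow_pos_of_pos hω _).le
  have hmoment := hstable.integral_pow_rpow_neg hα.1 hSmeas hSpos
  have hcancel (x : ℝ) (k : ℕ) :
      x ^ k * (k ! / Gamma (α * k + 1)) / k ! = x ^ k / Gamma (α * k + 1) := by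
    field_simp
  have hsum : Summable fun k : ℕ => l ^ k * (∫ ω, (S ω ^ (-α)) ^ k ∂P) / k ! := by
    simpa only [hmoment, hcancel] using summable_pow_div_Gamma_mul_add_one hα.1 l
  rw [← (hasSum_integral_exp_neg_mul hM0
    (hstable.integrable_pow_rpow_neg hα.1 hSmeas hSpos) hl hsum).tsum_eq]
  simp only [hmoment, hcancel]

/-- The Mittag--Leffler random variable `M = S^(-α)` obtained from a positive
`α`-stable random variable `S` (with `E[exp (-λ S)] = exp (-λ^α)`, `α ∈ (0,1)`,
`S > 0` a.s.) has Laplace transform the Mittag--Leffler function: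
`E[exp (-λ M)] = ∑_{k} (-λ)^k / Γ(αk + 1)` for all `λ ≥ 0`. -/
theorem mittagLeffler_laplace_transform
    {Ω : Type*} [MeasurableSpace Ω] (P : Measure Ω) [IsProbabilityMeasure P]
    (α : ℝ) (hα : α ∈ Set.Ioo (0 : ℝ) 1)
    (S : Ω → ℝ) (hSmeas : Measurable S) (hSnonneg : ∀ ω, 0 ≤ S ω)
    (hSpos : ∀ᵐ ω ∂P, 0 < S ω)
    (hLaplace : ∀ l : ℝ, 0 ≤ l →
      ∫ ω, Real.exp (-(l * S ω)) ∂P = Real.exp (-(l ^ α))) :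
    ∀ l : ℝ, 0 ≤ l →
      ∫ ω, Real.exp (-(l * S ω ^ (-α))) ∂P
        = ∑' k : ℕ, (-l) ^ k / Real.Gamma (α * k + 1) :=
  mittagLeffler_laplace_transform_general P α hα S hSmeas hSpos hLaplace
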